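/- Let ψ be a rational function associated with a projection P_ã mapping C1 onto C2. Then the set 𝒢_ψ of parameter values t0 such that the pair (x1(t0), x2(ψ(t0))) is unlucky is finite. -/

import Mathlib

noncomputable section

open Polynomial Filter Matrix

/-- Evaluation of a real rational function at a real point (junk value at poles). -/
def RFeval (f : RatFunc ℝ) (t : ℝ) : ℝ := f.num.eval t / f.denom.eval t

/-- Evaluation of a real rational function at a complex point (junk value at poles). -/
def RFevalC (f : RatFunc ℝ) (t : ℂ) : ℂ :=
  ((f.num.map (algebraMap ℝ ℂ)).eval t) / ((f.denom.map (algebraMap ℝ ℂ)).eval t)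

/-- The derivative of a rational function. -/
def RFderiv (f : RatFunc ℝ) : RatFunc ℝ :=
  (algebraMap (Polynomial ℝ) (RatFunc ℝ) (derivative f.num) *
      algebraMap (Polynomial ℝ) (RatFunc ℝ) f.denom -
    algebraMap (Polynomial ℝ) (RatFunc ℝ) f.num *
      algebraMap (Polynomial ℝ) (RatFunc ℝ) (derivative f.denom)) /
  algebraMap (Polynomial ℝ) (RatFunc ℝ) (f.denom ^ 2)

/-- The real domain of definition of a rational space parametrization. -/
def DomR (x : Fin 3 → RatFunc ℝ) (t : ℝ) : Prop := ∀ i, (x i).denom.eval t ≠ 0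

/-- The complex domain of definition of a rational space parametrization. -/
def DomC (x : Fin 3 → RatFunc ℝ) (t : ℂ) : Prop :=
  ∀ i, ((x i).denom.map (algebraMap ℝ ℂ)).eval t ≠ 0

/-- The affine point of the curve corresponding to the (real) parameter value `t`. -/
def evalAff (x : Fin 3 → RatFunc ℝ) (t : ℝ) : Fin 3 → ℝ := fun i => RFeval (x i) t

/-- The affine point of the curve corresponding to the (complex) parameter value `t`. -/
def evalAffC (x : Fin 3 → RatFunc ℝ) (t : ℂ) : Fin 3 → ℂ := fun i => RFevalC (x i) t

/-- Properness of a parametrization: it is injective for all but finitely many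
(complex) parameter values. -/
def ProperParam (x : Fin 3 → RatFunc ℝ) : Prop :=
  {t : ℂ | DomC x t ∧ ∃ t', t' ≠ t ∧ DomC x t' ∧ evalAffC x t' = evalAffC x t}.Finite

/-- The curve is a straight line. -/
def IsLineParam (x : Fin 3 → RatFunc ℝ) : Prop :=
  ∃ p v : Fin 3 → ℝ, v ≠ 0 ∧ ∀ t : ℝ, DomR x t → ∃ μ : ℝ, evalAff x t = p + μ • v

/-- The curve lies in the plane with coefficient vector `n = (A,B,C,D)`,
of equation `Ax + By + Cz + D = 0`. -/
def InPlane (x : Fin 3 → RatFunc ℝ) (n : Fin 4 → ℝ) : Prop :=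
  ∀ t : ℝ, DomR x t → (∑ i : Fin 3, n i.castSucc * RFeval (x i) t) + n 3 = 0

/-- The normal vector of the plane `Ax + By + Cz + D = 0` is nonzero. -/
def PlaneNormalNZ (n : Fin 4 → ℝ) : Prop := ¬ (n 0 = 0 ∧ n 1 = 0 ∧ n 2 = 0)

/-- Complexification of a real vector. -/
def cmap4 (v : Fin 4 → ℝ) : Fin 4 → ℂ := fun i => (v i : ℂ)

/-- Homogeneous form of the projection onto the plane `n` from the eye point `a`:
`p ↦ ⟨n,p⟩ a − ⟨n,a⟩ p`. -/
def projHC (n a p : Fin 4 → ℂ) : Fin 4 → ℂ :=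
  (∑ i, n i * p i) • a - (∑ i, n i * a i) • p

/-- Complex homogeneous coordinates of the affine point `x(t)`. -/
def homC (x : Fin 3 → RatFunc ℝ) (t : ℂ) : Fin 4 → ℂ :=
  Fin.snoc (evalAffC x t) 1

/-- The affine form of the projection, acting on affine (complex) points. -/
def projAffC (n a : Fin 4 → ℝ) (p : Fin 3 → ℂ) : Fin 3 → ℂ :=
  fun i => projHC (cmap4 n) (cmap4 a) (Fin.snoc p 1) i.castSucc /
    projHC (cmap4 n) (cmap4 a) (Fin.snoc p 1) 3

/-- The parameter values `t`, `s` are related by the projection from the eye point `a`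
onto the plane `n`: the projection maps `x1(t)` to `x2(s)`. -/
def RelatedByProj (n a : Fin 4 → ℝ) (x1 x2 : Fin 3 → RatFunc ℝ) (t s : ℂ) : Prop :=
  DomC x1 t ∧ DomC x2 s ∧
    ∃ lam : ℂ, lam ≠ 0 ∧ projHC (cmap4 n) (cmap4 a) (homC x1 t) = lam • homC x2 s

/-- `C2` (parametrized by `x2`) is the projection of `C1` (parametrized by `x1`)
from the eye point `a` onto the plane `n`: every point of `C2` (up to finitely many)
is the projection of some point of `C1`.  The eye point is a nonzero vector of `ℝ⁴`
(projective coordinates) not lying on the plane. -/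
def IsProjectionOf (n a : Fin 4 → ℝ) (x1 x2 : Fin 3 → RatFunc ℝ) : Prop :=
  a ≠ 0 ∧ (∑ i, n i * a i) ≠ 0 ∧
    ∀ᶠ s : ℂ in cofinite, ∃ t : ℂ, RelatedByProj n a x1 x2 t s

/-- The projection, restricted to `C1`, is injective for almost all points of `C2`. -/
def NonDegenerateProj (n a : Fin 4 → ℝ) (x1 x2 : Fin 3 → RatFunc ℝ) : Prop :=
  ∀ᶠ s : ℂ in cofinite, ∃! t : ℂ, RelatedByProj n a x1 x2 t s

/-- `ψ` is associated with the projection:  `P_ã ∘ x1 = x2 ∘ ψ`. -/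
def AssociatedRF (n a : Fin 4 → ℝ) (x1 x2 : Fin 3 → RatFunc ℝ) (ψ : RatFunc ℝ) : Prop :=
  ∀ᶠ t : ℂ in cofinite, RelatedByProj n a x1 x2 t (RFevalC ψ t)

/-- `N(t,s)·(x1(t) − x2(s)) = det(x1(t) − x2(s), x1'(t), x2'(s))`,
where `N(t,s) = x1'(t) × x2'(s)`, evaluated at the complex pair `(t,s)`. -/
def NdotC (x1 x2 : Fin 3 → RatFunc ℝ) (t s : ℂ) : ℂ :=
  dotProduct
    (crossProduct (fun i => RFevalC (RFderiv (x1 i)) t) (fun i => RFevalC (RFderiv (x2 i)) s))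
    (fun i => RFevalC (x1 i) t - RFevalC (x2 i) s)

/-- Evaluation of a bivariate real polynomial at a complex point `(t,s)`. -/
def aeval2 (t s : ℂ) (F : MvPolynomial (Fin 2) ℝ) : ℂ := MvPolynomial.aeval ![t, s] F

/-- `Ncal` is (a representative of) the square-free part of the numerator of the
bivariate rational function `N(t,s)·(x1(t) − x2(s))`: it is square-free and has the
same zero set. -/
def IsNcal (x1 x2 : Fin 3 → RatFunc ℝ) (Ncal : MvPolynomial (Fin 2) ℝ) : Prop :=
  Squarefree Ncal ∧
    ∀ t s : ℂ, DomC x1 t → DomC x2 s → (aeval2 t s Ncal = 0 ↔ NdotC x1 x2 t s = 0)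

/-- The polynomial `G(t,s) = p(t) − s·q(t)` associated with `ψ = p/q`;
variable `0` is `t` and variable `1` is `s`. -/
def assocPoly (ψ : RatFunc ℝ) : MvPolynomial (Fin 2) ℝ :=
  Polynomial.aeval (MvPolynomial.X 0) ψ.num -
    MvPolynomial.X 1 * Polynomial.aeval (MvPolynomial.X 0) ψ.denom

/-- `(t,s)` is a singular point of the plane curve `𝒩* : Ncal = 0`. -/
def SingPt (Ncal : MvPolynomial (Fin 2) ℝ) (t s : ℂ) : Prop :=
  aeval2 t s Ncal = 0 ∧ aeval2 t s (MvPolynomial.pderiv 0 Ncal) = 0 ∧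
    aeval2 t s (MvPolynomial.pderiv 1 Ncal) = 0

/-- `p` is the limit point `P^∞ = lim_{t→∞} x(t)` of the parametrization `x`. -/
def IsLimitPoint (x : Fin 3 → RatFunc ℝ) (p : Fin 3 → ℂ) : Prop :=
  Filter.Tendsto (evalAffC x) (Filter.cocompact ℂ) (nhds p)

/-- `q` is a self-intersection of the curve parametrized by `x`. -/
def SelfIntersection (x : Fin 3 → RatFunc ℝ) (q : Fin 3 → ℂ) : Prop :=
  ∃ s1 s2 : ℂ, s1 ≠ s2 ∧ DomC x s1 ∧ DomC x s2 ∧ evalAffC x s1 = q ∧ evalAffC x s2 = q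

/-- The pair `(x1(t0), x2(s0))` is lucky. -/
def LuckyPair (x1 x2 : Fin 3 → RatFunc ℝ) (Ncal : MvPolynomial (Fin 2) ℝ)
    (t0 s0 : ℂ) : Prop :=
  evalAffC x1 t0 ≠ evalAffC x2 s0 ∧
  ¬ IsLimitPoint x1 (evalAffC x1 t0) ∧
  ¬ IsLimitPoint x2 (evalAffC x2 s0) ∧
  ¬ SelfIntersection x2 (evalAffC x2 s0) ∧
  ¬ ∃ s' : ℂ, SingPt Ncal t0 s'

/-!
Each condition in the definition of a lucky pair fails for only finitely many parameters `t`, so it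
suffices to check them one at a time along the cofinite filter. Denominators have finitely many
roots. The function `ψ` is not constant, since otherwise almost all of `C1` would project to the
single point `x2(ψ)` and `C2` would be finite; hence `ψ` has finite fibres and pulls the conditions
on `s = ψ(t)` (definedness, not the limit point, not a self-intersection, the latter by properness)
back to cofinitely many `t`. If `x1(t) = x2(ψ(t))` then `x1(t)` lies in the plane `Π` of `C2`,
which happens for finitely many `t` because `C1 ⊄ Π`. A nonconstant parametrization meets its limit
point finitely often. Finally, `𝒩` is squarefree, hence coprime to `∂𝒩/∂s` over `ℝ(t)` (Gauss's
lemma); clearing denominators gives `U 𝒩 + V ∂𝒩/∂s = d(t)` with `d ≠ 0`, so every singular point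
of `𝒩*` lies on one of the finitely many lines `d(t) = 0`.
-/

theorem Squarefree.map_mulEquiv {M N : Type*} [Monoid M] [Monoid N] (e : M ≃* N) {x : M}
    (hx : Squarefree x) : Squarefree (e x) := fun q hq => by
  simpa using (hx (e.symm q) (by simpa using map_dvd e.symm hq)).map e

section FractionField

variable {R : Type*} [CommRing R] [IsDomain R] [NormalizedGCDMonoid R]

theorem Polynomial.exists_isPrimitive_associated_map (K : Type*) [Field K] [Algebra R K]
    [IsFractionRing R K] {q : K[X]} (hq : q ≠ 0) :
    ∃ Q : R[X], Q.IsPrimitive ∧ Associated (Q.map (algebraMap R K)) q := by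
  obtain ⟨b, hb, hbq⟩ := IsLocalization.integerNormalization_spec (nonZeroDivisors R) q
  set Q := IsLocalization.integerNormalization (nonZeroDivisors R) q
  have hQ : Q ≠ 0 := by rwa [Ne, IsFractionRing.integerNormalization_eq_zero_iff]
  have hunit : ∀ r : R, r ≠ 0 → IsUnit (C (algebraMap R K r)) := fun r hr =>
    isUnit_C.mpr (Ne.isUnit ((map_ne_zero_iff _ (IsFractionRing.injective R K)).mpr hr))
  have hmap : C (algebraMap R K Q.content) * Q.primPart.map (algebraMap R K)
      = C (algebraMap R K b) * q := by
    rw [← Polynomial.map_C, ← Polynomial.map_mul, ← Q.eq_C_content_mul_primPart, hbq,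
      Algebra.smul_def, Polynomial.algebraMap_apply]
  refine ⟨Q.primPart, Q.isPrimitive_primPart, ?_⟩
  refine (associated_unit_mul_right _ _ (hunit _ (Q.content_eq_zero_iff.not.mpr hQ))).trans ?_
  rw [hmap]
  exact associated_unit_mul_left _ _ (hunit _ (nonZeroDivisors.ne_zero hb))

theorem Squarefree.map_fraction (K : Type*) [Field K] [Algebra R K] [IsFractionRing R K]
    {P : R[X]} (hP : Squarefree P) : Squarefree (P.map (algebraMap R K)) := by
  intro q hq
  have hq0 : q ≠ 0 := by
    rintro rfl
    exact hP.ne_zero (Polynomial.map_injective _ (IsFractionRing.injective R K)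
      (by simpa using hq))
  obtain ⟨Q, hQ, hQq⟩ := exists_isPrimitive_associated_map (R := R) K hq0
  have hQQ : Q * Q ∣ P := by
    refine (hQ.mul hQ).dvd_of_fraction_map_dvd_fraction_map (K := K) ?_
    rw [Polynomial.map_mul]
    exact (hQq.mul_mul hQq).dvd.trans hq
  exact hQq.isUnit ((hP Q hQQ).map (mapRingHom (algebraMap R K)))

theorem Squarefree.exists_mul_add_mul_derivative_eq_C [CharZero R] {P : R[X]}
    (hP : Squarefree P) :
    ∃ U V : R[X], ∃ d : R, d ≠ 0 ∧ U * P + V * derivative P = C d := by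
  obtain ⟨u, v, huv⟩ : (P.map (algebraMap R (FractionRing R))).Separable :=
    PerfectField.separable_iff_squarefree.mpr (hP.map_fraction _)
  obtain ⟨bu, hbu, hu⟩ := IsLocalization.integerNormalization_spec (nonZeroDivisors R) u
  obtain ⟨bv, hbv, hv⟩ := IsLocalization.integerNormalization_spec (nonZeroDivisors R) v
  refine ⟨IsLocalization.integerNormalization (nonZeroDivisors R) u * C bv,
    IsLocalization.integerNormalization (nonZeroDivisors R) v * C bu, bu * bv,
    mul_ne_zero (nonZeroDivisors.ne_zero hbu) (nonZeroDivisors.ne_zero hbv), ?_⟩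
  apply Polynomial.map_injective _ (IsFractionRing.injective R (FractionRing R))
  simp only [Polynomial.map_add, Polynomial.map_mul, Polynomial.map_C, hu, hv,
    Algebra.smul_def, Polynomial.algebraMap_apply, map_mul, ← Polynomial.derivative_map]
  linear_combination (C (algebraMap R _ bu) * C (algebraMap R _ bv)) * huv

end FractionField

def bivariateEquiv (R : Type*) [CommRing R] : MvPolynomial (Fin 2) R ≃ₐ[R] R[X][X] :=
  (MvPolynomial.renameEquiv R (Equiv.swap 0 1)).trans <|
    (MvPolynomial.finSuccEquiv R 1).trans (mapAlgEquiv (MvPolynomial.uniqueAlgEquiv R (Fin 1)))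

section Bivariate

variable {R : Type*} [CommRing R]

@[simp] theorem bivariateEquiv_C (r : R) : bivariateEquiv R (MvPolynomial.C r) = C (C r) :=
  (bivariateEquiv R).commutes r

@[simp] theorem bivariateEquiv_X_zero : bivariateEquiv R (MvPolynomial.X 0) = C X := by
  have h : (1 : Fin 2) = Fin.succ 0 := rfl
  simp only [bivariateEquiv, AlgEquiv.trans_apply, MvPolynomial.renameEquiv_apply,
    MvPolynomial.rename_X, Equiv.swap_apply_left, coe_mapAlgEquiv]
  rw [h, MvPolynomial.finSuccEquiv_X_succ]
  simp

@[simp] theorem bivariateEquiv_X_one : bivariateEquiv R (MvPolynomial.X 1) = X := by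
  simp [bivariateEquiv, MvPolynomial.finSuccEquiv_X_zero]

theorem bivariateEquiv_pderiv_one (F : MvPolynomial (Fin 2) R) :
    bivariateEquiv R (MvPolynomial.pderiv 1 F) = derivative (bivariateEquiv R F) := by
  induction F using MvPolynomial.induction_on with
  | C r => simp
  | add p q hp hq => simp [hp, hq]
  | mul_X p i hp =>
    fin_cases i <;> simp [hp, derivative_mul, MvPolynomial.pderiv_X] <;> ring

theorem aeval_eq_aevalAeval_bivariateEquiv {A : Type*} [CommRing A] [Algebra R A] (t s : A)
    (F : MvPolynomial (Fin 2) R) :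
    MvPolynomial.aeval ![t, s] F = aevalAeval t s (bivariateEquiv R F) := by
  have : (aevalAeval t s).comp (bivariateEquiv R).toAlgHom = MvPolynomial.aeval ![t, s] := by
    ext i; fin_cases i <;> simp
  rw [← this]; rfl

end Bivariate

section RationalFunctions

variable {K F : Type*} [Field K] [Field F]

theorem eventually_cofinite_eval_map_ne_zero (φ : K →+* F) {p : K[X]} (hp : p ≠ 0) :
    ∀ᶠ t in cofinite, (p.map φ).eval t ≠ 0 := by
  simpa using Polynomial.finite_setOfPred_isRoot ((Polynomial.map_ne_zero_iff φ.injective).mpr hp)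

theorem eventually_cofinite_domC (x : Fin 3 → RatFunc ℝ) : ∀ᶠ t in cofinite, DomC x t :=
  eventually_all.mpr fun i => eventually_cofinite_eval_map_ne_zero _ (x i).denom_ne_zero

theorem RFevalC_C (c : ℝ) (t : ℂ) : RFevalC (RatFunc.C c) t = c := by
  simp [RFevalC]

theorem RatFunc.exists_eq_C_of_num_map_eq (f : RatFunc ℝ) {α : ℂ}
    (h : f.num.map (algebraMap ℝ ℂ) = Polynomial.C α * f.denom.map (algebraMap ℝ ℂ)) :
    ∃ c : ℝ, f = RatFunc.C c := by
  set d := f.denom.natDegree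
  -- `α` is real: compare the coefficients of degree `deg f.denom`, where `f.denom` is monic.
  have hα : algebraMap ℝ ℂ (f.num.coeff d) = α := by
    have hd : (f.denom.map (algebraMap ℝ ℂ)).coeff d = 1 := by
      rw [coeff_map, f.monic_denom.coeff_natDegree, map_one]
    simpa [coeff_C_mul, hd] using congrArg (coeff · d) h
  have hnum : f.num = Polynomial.C (f.num.coeff d) * f.denom := by
    apply Polynomial.map_injective _ (algebraMap ℝ ℂ).injective
    rw [Polynomial.map_mul, Polynomial.map_C, hα, h]
  refine ⟨f.num.coeff d, ?_⟩
  conv_lhs => rw [← f.num_div_denom, hnum]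
  rw [map_mul, RatFunc.algebraMap_C,
    mul_div_cancel_right₀ _ (RatFunc.algebraMap_ne_zero f.denom_ne_zero)]

theorem eventually_cofinite_RFevalC_ne {f : RatFunc ℝ} (hf : ∀ c : ℝ, f ≠ RatFunc.C c) (α : ℂ) :
    ∀ᶠ t in cofinite, RFevalC f t ≠ α := by
  set g := f.num.map (algebraMap ℝ ℂ) - C α * f.denom.map (algebraMap ℝ ℂ)
  have hg : g ≠ 0 := fun h => by
    obtain ⟨c, hc⟩ := f.exists_eq_C_of_num_map_eq (sub_eq_zero.mp h)
    exact hf c hc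
  filter_upwards [eventually_cofinite_eval_map_ne_zero (algebraMap ℝ ℂ) f.denom_ne_zero,
    (Polynomial.finite_setOfPred_isRoot hg).compl_mem_cofinite] with t hden hgt ht
  rw [RFevalC, div_eq_iff hden] at ht
  exact hgt (show g.eval t = 0 by rw [eval_sub, eval_mul, eval_C, ht, sub_self])

theorem tendsto_RFevalC_cofinite {f : RatFunc ℝ} (hf : ∀ c : ℝ, f ≠ RatFunc.C c) :
    Tendsto (RFevalC f) cofinite cofinite :=
  Tendsto.cofinite_of_finite_preimage_singleton fun α => by
    simpa [Set.preimage, not_not] using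
      (eventually_cofinite.mp (eventually_cofinite_RFevalC_ne hf α)).to_subtype

end RationalFunctions

section Parametrizations

variable {x : Fin 3 → RatFunc ℝ}

theorem exists_ne_C_of_not_isLineParam (h : ¬ IsLineParam x) :
    ∃ i, ∀ c : ℝ, x i ≠ RatFunc.C c := by
  by_contra! hconst
  choose c hc using hconst
  refine h ⟨c, Pi.single 0 1, by simp, fun t _ => ⟨0, funext fun i => ?_⟩⟩
  simp [evalAff, RFeval, hc i]

theorem eventually_cofinite_evalAffC_ne (hx : ∃ i, ∀ c : ℝ, x i ≠ RatFunc.C c) (p : Fin 3 → ℂ) :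
    ∀ᶠ t in cofinite, evalAffC x t ≠ p := by
  obtain ⟨i, hi⟩ := hx
  filter_upwards [eventually_cofinite_RFevalC_ne hi (p i)] with t ht hp
  exact ht (congrFun hp i)

theorem eventually_cofinite_not_isLimitPoint (hx : ∃ i, ∀ c : ℝ, x i ≠ RatFunc.C c) :
    ∀ᶠ t in cofinite, ¬ IsLimitPoint x (evalAffC x t) := by
  by_cases h : ∃ t₀, IsLimitPoint x (evalAffC x t₀)
  · obtain ⟨t₀, ht₀⟩ := h
    filter_upwards [eventually_cofinite_evalAffC_ne hx (evalAffC x t₀)] with t ht hlim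
    exact ht (tendsto_nhds_unique hlim ht₀)
  · exact Eventually.of_forall (not_exists.mp h)

theorem ProperParam.eventually_cofinite_not_selfIntersection (hx : ProperParam x) :
    ∀ᶠ s in cofinite, ¬ SelfIntersection x (evalAffC x s) := by
  filter_upwards [eventually_cofinite_domC x, hx.compl_mem_cofinite]
    with s hs hinj ⟨s₁, s₂, hne, hs₁, hs₂, h₁, h₂⟩
  have hfiber : ∀ s', s' ≠ s → DomC x s' → evalAffC x s' ≠ evalAffC x s :=
    fun s' hs' hd he => hinj ⟨hs, s', hs', hd, he⟩
  by_cases h : s₁ = s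
  · exact hfiber s₂ (h ▸ hne.symm) hs₂ h₂
  · exact hfiber s₁ h hs₁ h₁

end Parametrizations

section Planes

def planeFormC (n : Fin 4 → ℝ) (p : Fin 3 → ℂ) : ℂ := ∑ i : Fin 3, (n i.castSucc : ℂ) * p i + n 3

/-- The plane equation along `x`, with denominators cleared. -/
def planePoly (n : Fin 4 → ℝ) (x : Fin 3 → RatFunc ℝ) : ℝ[X] :=
  C (n 0) * (x 0).num * ((x 1).denom * (x 2).denom) +
  C (n 1) * (x 1).num * ((x 0).denom * (x 2).denom) +
  C (n 2) * (x 2).num * ((x 0).denom * (x 1).denom) +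
  C (n 3) * ((x 0).denom * ((x 1).denom * (x 2).denom))

variable {F : Type*} [Field F] {n : Fin 4 → ℝ} {x : Fin 3 → RatFunc ℝ}

theorem eval_map_planePoly (φ : ℝ →+* F) {t : F} (ht : ∀ i, ((x i).denom.map φ).eval t ≠ 0) :
    ((planePoly n x).map φ).eval t = (∏ i, ((x i).denom.map φ).eval t) *
      (∑ i : Fin 3, φ (n i.castSucc) * (((x i).num.map φ).eval t / ((x i).denom.map φ).eval t)
        + φ (n 3)) := by
  have := ht 0; have := ht 1; have := ht 2
  have h₀ : (0 : Fin 3).castSucc = 0 := rfl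
  have h₁ : (1 : Fin 3).castSucc = 1 := rfl
  have h₂ : (2 : Fin 3).castSucc = 2 := rfl
  simp only [planePoly, h₀, h₁, h₂, Fin.prod_univ_three, Fin.sum_univ_three, Polynomial.map_add,
    Polynomial.map_mul, Polynomial.map_C, eval_add, eval_mul, eval_C]
  field_simp

theorem eval_planePoly {t : ℝ} (ht : DomR x t) :
    (planePoly n x).eval t =
      (∏ i, (x i).denom.eval t) * ((∑ i : Fin 3, n i.castSucc * RFeval (x i) t) + n 3) := by
  simpa [RFeval] using
    eval_map_planePoly (n := n) (RingHom.id ℝ) (t := t) (by simpa [DomR] using ht)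

theorem eval_map_planePoly_complex {t : ℂ} (ht : DomC x t) :
    ((planePoly n x).map (algebraMap ℝ ℂ)).eval t =
      (∏ i, ((x i).denom.map (algebraMap ℝ ℂ)).eval t) * planeFormC n (evalAffC x t) := by
  simpa [planeFormC, evalAffC, RFevalC] using eval_map_planePoly (n := n) (algebraMap ℝ ℂ) ht

theorem planePoly_eq_zero_iff : planePoly n x = 0 ↔ InPlane x n := by
  constructor
  · intro h t ht
    have := eval_planePoly (n := n) ht
    rw [h, eval_zero, eq_comm, mul_eq_zero, Finset.prod_eq_zero_iff] at this
    exact this.resolve_left fun ⟨i, _, hi⟩ => ht i hi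
  · intro h
    apply eq_zero_of_infinite_isRoot
    have hdom : ∀ᶠ t in cofinite, DomR x t := eventually_all.mpr fun i => by
      simpa using eventually_cofinite_eval_map_ne_zero (RingHom.id ℝ) (x i).denom_ne_zero
    refine (frequently_cofinite_iff_infinite.mp hdom.frequently).mono fun t ht => ?_
    rw [Set.mem_ofPred_eq, IsRoot, eval_planePoly ht, h t ht, mul_zero]

theorem InPlane.planeFormC_evalAffC_eq_zero (h : InPlane x n) {s : ℂ} (hs : DomC x s) :
    planeFormC n (evalAffC x s) = 0 := by
  have := eval_map_planePoly_complex (n := n) hs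
  rw [planePoly_eq_zero_iff.mpr h, Polynomial.map_zero, eval_zero, eq_comm, mul_eq_zero,
    Finset.prod_eq_zero_iff] at this
  exact this.resolve_left fun ⟨i, _, hi⟩ => hs i hi

theorem eventually_cofinite_planeFormC_ne_zero (h : ¬ InPlane x n) :
    ∀ᶠ t in cofinite, planeFormC n (evalAffC x t) ≠ 0 := by
  filter_upwards [eventually_cofinite_domC x,
    eventually_cofinite_eval_map_ne_zero (algebraMap ℝ ℂ) (mt planePoly_eq_zero_iff.mp h)]
    with t ht hP
  rw [eval_map_planePoly_complex ht] at hP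
  exact right_ne_zero_of_mul hP

end Planes

section Projections

variable {n a : Fin 4 → ℝ} {x1 x2 : Fin 3 → RatFunc ℝ}

theorem homC_last (x : Fin 3 → RatFunc ℝ) (t : ℂ) : homC x t 3 = 1 :=
  Fin.snoc_last (α := fun _ => ℂ) _ _

theorem homC_castSucc (x : Fin 3 → RatFunc ℝ) (t : ℂ) (i : Fin 3) :
    homC x t i.castSucc = evalAffC x t i :=
  Fin.snoc_castSucc (α := fun _ => ℂ) _ _ _

theorem RelatedByProj.evalAffC_eq {t s s' : ℂ} (h : RelatedByProj n a x1 x2 t s)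
    (h' : RelatedByProj n a x1 x2 t s') : evalAffC x2 s = evalAffC x2 s' := by
  obtain ⟨-, -, lam, hlam, heq⟩ := h
  obtain ⟨-, -, lam', -, heq'⟩ := h'
  have hcoord : ∀ j, lam * homC x2 s j = lam' * homC x2 s' j := fun j => by
    simpa using (congrFun heq j).symm.trans (congrFun heq' j)
  have hlam' : lam = lam' := by simpa [homC_last] using hcoord 3
  funext i
  simpa [homC_castSucc, ← hlam', hlam] using hcoord i.castSucc

theorem finite_setOf_relatedByProj (hx2 : ∃ i, ∀ c : ℝ, x2 i ≠ RatFunc.C c) (t : ℂ) :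
    {s | RelatedByProj n a x1 x2 t s}.Finite := by
  rcases Set.eq_empty_or_nonempty {s | RelatedByProj n a x1 x2 t s} with h | ⟨s₀, hs₀⟩
  · simp [h]
  · exact (eventually_cofinite.mp (eventually_cofinite_evalAffC_ne hx2 (evalAffC x2 s₀))).subset
      fun s hs => not_not.mpr (RelatedByProj.evalAffC_eq hs hs₀)

theorem AssociatedRF.ne_C {ψ : RatFunc ℝ} (hψ : AssociatedRF n a x1 x2 ψ)
    (hx2 : ∃ i, ∀ c : ℝ, x2 i ≠ RatFunc.C c)
    (hsurj : ∀ᶠ s in cofinite, ∃ t, RelatedByProj n a x1 x2 t s) (c : ℝ) :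
    ψ ≠ RatFunc.C c := by
  rintro rfl
  have hbad : {t | ¬ RelatedByProj n a x1 x2 t c}.Finite := by
    simpa [RFevalC_C] using eventually_cofinite.mp hψ
  have himage : {s | ∃ t, RelatedByProj n a x1 x2 t s}.Finite := by
    have hfib (t : ℂ) := finite_setOf_relatedByProj (n := n) (a := a) (x1 := x1) hx2 t
    have hfib_c := eventually_cofinite.mp (eventually_cofinite_evalAffC_ne hx2 (evalAffC x2 c))
    refine ((hbad.biUnion fun t _ => hfib t).union hfib_c).subset ?_
    rintro s ⟨t, hts⟩
    by_cases htc : RelatedByProj n a x1 x2 t c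
    · exact Or.inr (not_not.mpr (hts.evalAffC_eq htc))
    · exact Or.inl (Set.mem_biUnion htc hts)
  obtain ⟨s, hs, hs'⟩ := (hsurj.and himage.eventually_cofinite_notMem).exists
  exact hs' hs

end Projections

theorem eventually_cofinite_not_singPt {Ncal : MvPolynomial (Fin 2) ℝ} (h : Squarefree Ncal) :
    ∀ᶠ t in cofinite, ¬ ∃ s, SingPt Ncal t s := by
  have hsq : Squarefree (bivariateEquiv ℝ Ncal) := h.map_mulEquiv (bivariateEquiv ℝ).toMulEquiv
  obtain ⟨U, V, d, hd, hUV⟩ := hsq.exists_mul_add_mul_derivative_eq_C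
  filter_upwards [eventually_cofinite_eval_map_ne_zero (algebraMap ℝ ℂ) hd] with t ht
  rintro ⟨s, hN, -, hNs⟩
  have := congrArg (aevalAeval t s) hUV
  rw [map_add, map_mul, map_mul, ← bivariateEquiv_pderiv_one, ← aeval_eq_aevalAeval_bivariateEquiv,
    ← aeval_eq_aevalAeval_bivariateEquiv, aevalAeval_C] at this
  rw [← aeval2, ← aeval2, hN, hNs, mul_zero, mul_zero, add_zero, aeval_def,
    eval₂_eq_eval_map] at this
  exact ht this.symm

theorem statement_14_general (x1 x2 : Fin 3 → RatFunc ℝ) (n a : Fin 4 → ℝ) (ψ : RatFunc ℝ)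
    (Ncal : MvPolynomial (Fin 2) ℝ)
    (hx2 : ProperParam x2)
    (hnl1 : ¬ IsLineParam x1) (hnl2 : ¬ IsLineParam x2)
    (hn : PlaneNormalNZ n) (hplane : InPlane x2 n)
    (hsame : ¬ ∃ m : Fin 4 → ℝ, PlaneNormalNZ m ∧ InPlane x1 m ∧ InPlane x2 m)
    (hN : IsNcal x1 x2 Ncal)
    (hproj : IsProjectionOf n a x1 x2)
    (hψ : AssociatedRF n a x1 x2 ψ) :
    {t0 : ℂ | ¬ (DomC x1 t0 ∧ ((ψ.denom.map (algebraMap ℝ ℂ)).eval t0 ≠ 0) ∧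
        DomC x2 (RFevalC ψ t0) ∧
        LuckyPair x1 x2 Ncal t0 (RFevalC ψ t0))}.Finite := by
  have hx1c := exists_ne_C_of_not_isLineParam hnl1
  have hx2c := exists_ne_C_of_not_isLineParam hnl2
  have hψc : Tendsto (RFevalC ψ) cofinite cofinite :=
    tendsto_RFevalC_cofinite (hψ.ne_C hx2c hproj.2.2)
  have hoff : ¬ InPlane x1 n := fun h => hsame ⟨n, hn, h, hplane⟩
  refine eventually_cofinite.mp ?_
  filter_upwards [eventually_cofinite_domC x1,
    eventually_cofinite_eval_map_ne_zero (algebraMap ℝ ℂ) ψ.denom_ne_zero,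
    hψc.eventually (eventually_cofinite_domC x2),
    eventually_cofinite_planeFormC_ne_zero hoff,
    eventually_cofinite_not_isLimitPoint hx1c,
    hψc.eventually (eventually_cofinite_not_isLimitPoint hx2c),
    hψc.eventually hx2.eventually_cofinite_not_selfIntersection,
    eventually_cofinite_not_singPt hN.1] with t hdom1 hden hdom2 hplane1 hlim1 hlim2 hself hsing
  refine ⟨hdom1, hden, hdom2, fun heq => hplane1 ?_, hlim1, hlim2, hself, hsing⟩
  rw [heq]
  exact hplane.planeFormC_evalAffC_eq_zero hdom2

/-- Let `ψ` be a rational function associated with a projection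
`P_ã` mapping `C1` onto `C2`.  Then the set `𝒢_ψ` of parameter values `t0` such that
the pair `(x1(t0), x2(ψ(t0)))` is unlucky (in particular all `t0` where the pair is
not even well defined) is finite. -/
theorem statement_14 (x1 x2 : Fin 3 → RatFunc ℝ) (n a : Fin 4 → ℝ) (ψ : RatFunc ℝ)
    (Ncal : MvPolynomial (Fin 2) ℝ)
    (hx1 : ProperParam x1) (hx2 : ProperParam x2)
    (hnl1 : ¬ IsLineParam x1) (hnl2 : ¬ IsLineParam x2)
    (hn : PlaneNormalNZ n) (hplane : InPlane x2 n)
    (hsame : ¬ ∃ m : Fin 4 → ℝ, PlaneNormalNZ m ∧ InPlane x1 m ∧ InPlane x2 m)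
    (hN : IsNcal x1 x2 Ncal)
    (hproj : IsProjectionOf n a x1 x2)
    (hψ : AssociatedRF n a x1 x2 ψ) :
    {t0 : ℂ | ¬ (DomC x1 t0 ∧ ((ψ.denom.map (algebraMap ℝ ℂ)).eval t0 ≠ 0) ∧
        DomC x2 (RFevalC ψ t0) ∧
        LuckyPair x1 x2 Ncal t0 (RFevalC ψ t0))}.Finite :=
  statement_14_general x1 x2 n a ψ Ncal hx2 hnl1 hnl2 hn hplane hsame hN hproj hψ

end
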